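/- Let τ ∈ (0,1) and let X be a square-integrable real random variable with τ-expectile μ_τ(X) and let m ∈ ℝ with m ≠ μ_τ(X). Then E[R_τ(X − μ_τ(X))] < E[R_τ(X − m)]; i.e., the expectile is the strict minimizer of the expected asymmetric quadratic loss. -/

import Mathlib

/-!
With `c = min τ (1 - τ)`, the loss splits as
`Rloss τ u = c u² + (τ - c) (u⁺)² + (1 - τ - c) (u⁻)²` with nonnegative coefficients. The
squared positive and negative parts are midpoint convex and `u ↦ u²` gains exactly
`((u - v) / 2)²` at the midpoint, so `m ↦ E[Rloss τ (X - m)]` is strongly midpoint convex with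
modulus `c > 0`. Since the expectile `μ_τ` does at least as well as the midpoint of `μ_τ` and `m`,
the strict gain `c ((μ_τ - m) / 2)² > 0` forces `E[Rloss τ (X - μ_τ)] < E[Rloss τ (X - m)]`.
-/

open MeasureTheory

noncomputable def Rloss (τ u : ℝ) : ℝ :=
  τ * (max u 0) ^ 2 + (1 - τ) * (max (-u) 0) ^ 2

def IsExpectile {Ω : Type*} [MeasurableSpace Ω] (μ : Measure Ω) (τ : ℝ)
    (X : Ω → ℝ) (m : ℝ) : Prop :=
  ∀ m' : ℝ, ∫ ω, Rloss τ (X ω - m) ∂μ ≤ ∫ ω, Rloss τ (X ω - m') ∂μ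

lemma max_zero_sq_add_max_neg_zero_sq (u : ℝ) : max u 0 ^ 2 + max (-u) 0 ^ 2 = u ^ 2 := by
  rcases le_total u 0 with h | h
  · rw [max_eq_right h, max_eq_left (neg_nonneg.2 h)]; ring
  · rw [max_eq_left h, max_eq_right (neg_nonpos.2 h)]; ring

lemma max_zero_midpoint_sq_le (u v : ℝ) :
    max ((u + v) / 2) 0 ^ 2 ≤ (max u 0 ^ 2 + max v 0 ^ 2) / 2 := by
  have hmid : max ((u + v) / 2) 0 ≤ (max u 0 + max v 0) / 2 :=
    max_le (by linarith [le_max_left u 0, le_max_left v 0])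
      (by linarith [le_max_right u 0, le_max_right v 0])
  calc max ((u + v) / 2) 0 ^ 2 ≤ ((max u 0 + max v 0) / 2) ^ 2 :=
        pow_le_pow_left₀ (le_max_right _ _) hmid 2
    _ ≤ (max u 0 ^ 2 + max v 0 ^ 2) / 2 := by nlinarith [sq_nonneg (max u 0 - max v 0)]

lemma Rloss_eq_min_mul_sq_add (τ u : ℝ) :
    Rloss τ u = min τ (1 - τ) * u ^ 2 + (τ - min τ (1 - τ)) * max u 0 ^ 2
      + (1 - τ - min τ (1 - τ)) * max (-u) 0 ^ 2 := by
  unfold Rloss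
  linear_combination min τ (1 - τ) * max_zero_sq_add_max_neg_zero_sq u

lemma Rloss_midpoint_add_le (τ u v : ℝ) :
    Rloss τ ((u + v) / 2) + min τ (1 - τ) * ((u - v) / 2) ^ 2
      ≤ (Rloss τ u + Rloss τ v) / 2 := by
  have hpos := max_zero_midpoint_sq_le u v
  have hneg := max_zero_midpoint_sq_le (-u) (-v)
  rw [show (-u + -v) / 2 = -((u + v) / 2) by ring] at hneg
  have hτ : 0 ≤ τ - min τ (1 - τ) := sub_nonneg.2 (min_le_left _ _)
  have hτ' : 0 ≤ 1 - τ - min τ (1 - τ) := sub_nonneg.2 (min_le_right _ _)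
  rw [Rloss_eq_min_mul_sq_add, Rloss_eq_min_mul_sq_add τ u, Rloss_eq_min_mul_sq_add τ v]
  nlinarith [mul_le_mul_of_nonneg_left hpos hτ, mul_le_mul_of_nonneg_left hneg hτ']

lemma abs_Rloss_le (τ u : ℝ) : |Rloss τ u| ≤ (|τ| + |1 - τ|) * u ^ 2 := by
  calc |Rloss τ u| ≤ |τ| * max u 0 ^ 2 + |1 - τ| * max (-u) 0 ^ 2 := by
        unfold Rloss
        refine (abs_add_le _ _).trans ?_
        simp only [abs_mul, abs_sq, le_refl]
    _ ≤ (|τ| + |1 - τ|) * u ^ 2 := by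
        rw [← max_zero_sq_add_max_neg_zero_sq u]
        nlinarith [abs_nonneg τ, abs_nonneg (1 - τ), sq_nonneg (max u 0), sq_nonneg (max (-u) 0)]

lemma continuous_Rloss (τ : ℝ) : Continuous (Rloss τ) := by
  unfold Rloss
  fun_prop

section Integral

variable {Ω : Type*} [MeasurableSpace Ω] {μ : Measure Ω} [IsFiniteMeasure μ] {X : Ω → ℝ}

lemma integrable_Rloss_sub (hX : MemLp X 2 μ) (τ a : ℝ) :
    Integrable (fun ω => Rloss τ (X ω - a)) μ := by
  have hXa : MemLp (fun ω => X ω - a) 2 μ := hX.sub (memLp_const a)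
  refine (hXa.integrable_sq.const_mul (|τ| + |1 - τ|)).mono'
    ((continuous_Rloss τ).comp_aestronglyMeasurable hXa.1) (ae_of_all _ fun ω => ?_)
  rw [Real.norm_eq_abs]
  exact abs_Rloss_le τ (X ω - a)

lemma integral_Rloss_midpoint_add_le (hX : MemLp X 2 μ) (τ a b : ℝ) :
    ∫ ω, Rloss τ (X ω - (a + b) / 2) ∂μ + μ.real Set.univ * (min τ (1 - τ) * ((a - b) / 2) ^ 2)
      ≤ (∫ ω, Rloss τ (X ω - a) ∂μ + ∫ ω, Rloss τ (X ω - b) ∂μ) / 2 := by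
  have hpt (ω : Ω) : Rloss τ (X ω - (a + b) / 2) + min τ (1 - τ) * ((a - b) / 2) ^ 2
      ≤ (Rloss τ (X ω - a) + Rloss τ (X ω - b)) / 2 := by
    have h := Rloss_midpoint_add_le τ (X ω - a) (X ω - b)
    rwa [show (X ω - a + (X ω - b)) / 2 = X ω - (a + b) / 2 by ring,
      show (X ω - a - (X ω - b)) / 2 = -((a - b) / 2) by ring, neg_sq] at h
  have hint : ∫ ω, (Rloss τ (X ω - (a + b) / 2) + min τ (1 - τ) * ((a - b) / 2) ^ 2) ∂μ
      ≤ ∫ ω, (Rloss τ (X ω - a) + Rloss τ (X ω - b)) / 2 ∂μ :=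
    integral_mono ((integrable_Rloss_sub hX τ _).add (integrable_const _))
      (((integrable_Rloss_sub hX τ a).add (integrable_Rloss_sub hX τ b)).div_const 2) hpt
  rwa [integral_add (integrable_Rloss_sub hX τ _) (integrable_const _), integral_const,
    smul_eq_mul, integral_div, integral_add (integrable_Rloss_sub hX τ a)
      (integrable_Rloss_sub hX τ b)] at hint

end Integral

theorem stmt18 {Ω : Type*} [MeasurableSpace Ω] (μ : Measure Ω) [IsProbabilityMeasure μ]
    (X : Ω → ℝ) (hX : Measurable X) (hX2 : Integrable (fun ω => (X ω) ^ 2) μ)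
    (τ : ℝ) (hτ : τ ∈ Set.Ioo (0:ℝ) 1)
    (μτ : ℝ) (hμτ : IsExpectile μ τ X μτ)
    (m : ℝ) (hm : m ≠ μτ) :
    ∫ ω, Rloss τ (X ω - μτ) ∂μ < ∫ ω, Rloss τ (X ω - m) ∂μ := by
  have hXL2 : MemLp X 2 μ := (memLp_two_iff_integrable_sq hX.aestronglyMeasurable).2 hX2
  have hgain : 0 < min τ (1 - τ) * ((μτ - m) / 2) ^ 2 :=
    mul_pos (lt_min hτ.1 (sub_pos.2 hτ.2)) (pow_two_pos_of_ne_zero (div_ne_zero (sub_ne_zero.2 hm.symm) two_ne_zero))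
  have hmid := integral_Rloss_midpoint_add_le hXL2 τ μτ m
  rw [probReal_univ, one_mul] at hmid
  linarith [hμτ ((μτ + m) / 2)]
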